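/- In the missing-labels model with ᾱ = max_{y<m} α^{(y)} < 1, if the class of functions F satisfies Assumption 1, then the neural network distance satisfies d_F(P, Q) ≤ ((1 + ᾱ)/(1 − ᾱ)) · d_F(P̃, Q̃). (Corollary 1, eq. (12).) -/

import Mathlib

open scoped BigOperators
open MeasureTheory

/-- `P` is a probability mass function on `Z`. -/
def IsPMF {Z : Type*} (P : Z → ℝ) : Prop :=
  (∀ z, 0 ≤ P z) ∧ Summable P ∧ ∑' z, P z = 1

/-- The corrupted labeled distribution obtained by passing labels through the channel `C`:
`P̃(x,ỹ) = ∑ j, P(x,j) · C j ỹ`. -/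
noncomputable def corrupt {X : Type*} {k : ℕ} (P : X × Fin k → ℝ)
    (C : Matrix (Fin k) (Fin k) ℝ) : X × Fin k → ℝ :=
  fun z => ∑ j, P (z.1, j) * C j z.2

/-- The missing-labels parameter vector on `Fin (m+1)`: `α^{(y)}` on class labels, `0` on
the missing-label symbol `m`. -/
noncomputable def missAlpha (m : ℕ) (αv : Fin m → ℝ) : Fin (m + 1) → ℝ :=
  fun i => if h : (i : ℕ) < m then αv ⟨i, h⟩ else 0

/-- Confusion matrix of the missing-labels model:
`C = diag(𝟙 − α_m) + α_m e_m^T`. -/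
noncomputable def missConfusion (m : ℕ) (αv : Fin m → ℝ) :
    Matrix (Fin (m + 1)) (Fin (m + 1)) ℝ :=
  Matrix.diagonal (fun i => 1 - missAlpha m αv i) +
    Matrix.vecMulVec (missAlpha m αv) (Pi.single (Fin.last m) 1)

/-- `‖T‖_∞ = max_i ∑_j |T i j|` for a square real matrix. -/
noncomputable def matInfNorm {k : ℕ} (T : Matrix (Fin k) (Fin k) ℝ) : ℝ :=
  ⨆ i, ∑ j, |T i j|

/-- `(T ∘ f)(x, y) = ∑_ỹ T y ỹ · f (x, ỹ)`. -/
def chanOp {X : Type*} {k : ℕ} (T : Matrix (Fin k) (Fin k) ℝ)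
    (f : X × Fin k → ℝ) : X × Fin k → ℝ :=
  fun z => ∑ j, T z.2 j * f (z.1, j)

/-- Assumption 1: `F = F₁ + F₂ + constants`, where `F₁` is invariant under the action of
matrices of unit `∞`-norm, and `F₂` consists of `[0,1]`-scalings of label-independent
functions from a class `F₂'`. -/
def Assumption1 {X : Type*} {k : ℕ} (F : Set (X × Fin k → ℝ)) : Prop :=
  ∃ F1 F2 : Set (X × Fin k → ℝ),
    F = {f | ∃ f1 ∈ F1, ∃ f2 ∈ F2, ∃ c : ℝ, f = f1 + f2 + Function.const _ c} ∧
    (∀ T : Matrix (Fin k) (Fin k) ℝ, matInfNorm T = 1 → ∀ f ∈ F1, chanOp T f ∈ F1) ∧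
    (∃ F2' : Set (X → ℝ),
      F2 = {h | ∃ g ∈ F2', ∃ a : ℝ, 0 ≤ a ∧ a ≤ 1 ∧ h = fun z => a * g z.1})

/-- Neural network distance w.r.t. a class `F` of discriminators:
`d_F(P, Q) = sup_{f ∈ F} (E_P[f] − E_Q[f])`. -/
noncomputable def nnDist {X : Type*} {k : ℕ} (F : Set (X × Fin k → ℝ))
    (P Q : X × Fin k → ℝ) : ℝ :=
  sSup ((fun f => (∑' z, P z * f z) - ∑' z, Q z * f z) '' F)

/-!
Write `ᾱ = max_y α^{(y)}` and `κ = (1 + ᾱ)/(1 - ᾱ)`. An expectation under a corrupted distribution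
is the expectation of `C ∘ f` under the clean one. The confusion matrix `C` is invertible, and
row `i` of `C⁻¹` has absolute sum `(1 + α_i)/(1 - α_i)`, so `T = κ⁻¹ C⁻¹` has unit `∞`-norm.
For `f = f₁ + a g + c ∈ F` the discriminator `f' = T ∘ f₁ + (a/κ) g` lies in `F`, and since `C` is
row-stochastic it fixes label-independent functions, whence `C ∘ f' = κ⁻¹ (f - c)` and
`E_P f - E_Q f = κ (E_P̃ f' - E_Q̃ f')`.

Because `sSup` of a set unbounded above is `0`, the inequality also needs: if the corrupted
differences are unbounded, so are the clean ones. This follows from `C ∘ F ⊆ F`.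
-/

noncomputable def expect {Z : Type*} (P f : Z → ℝ) : ℝ :=
  ∑' z, P z * f z

section expect

variable {Z : Type*} {P f : Z → ℝ} {B : ℝ}

theorem Summable.mul_of_abs_le (hP : Summable P) (hf : ∀ z, |f z| ≤ B) :
    Summable (fun z => P z * f z) :=
  hP.abs.mul_right B |>.of_norm_bounded fun z => by
    rw [Real.norm_eq_abs, abs_mul]
    exact mul_le_mul_of_nonneg_left (hf z) (abs_nonneg _)

theorem expect_mul_sub_const (hP : Summable P) (hf : ∀ z, |f z| ≤ B) (a c : ℝ) :
    expect P (fun z => a * (f z - c)) = a * (expect P f - c * ∑' z, P z) := by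
  have h : (fun z => P z * (a * (f z - c))) = fun z => a * (P z * f z - c * P z) := by
    ext z; ring
  rw [expect, h, tsum_mul_left, (hP.mul_of_abs_le hf).tsum_sub (hP.mul_left c), tsum_mul_left]
  rfl

end expect

theorem nnDist_eq_sSup_expect {X : Type*} {k : ℕ} (F : Set (X × Fin k → ℝ))
    (P Q : X × Fin k → ℝ) : nnDist F P Q = sSup ((fun f => expect P f - expect Q f) '' F) :=
  rfl

theorem expect_corrupt {X : Type*} {k : ℕ} {P : X × Fin k → ℝ} (hP : Summable P)
    (C : Matrix (Fin k) (Fin k) ℝ) {f : X × Fin k → ℝ} {B : ℝ} (hf : ∀ z, |f z| ≤ B) :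
    expect (corrupt P C) f = expect P (chanOp C f) := by
  set G : (X × Fin k) × Fin k → ℝ := fun w => P w.1 * (C w.1.2 w.2 * f (w.1.1, w.2))
  have hG : Summable G := by
    obtain ⟨M, hM⟩ := (Set.finite_range fun p : Fin k × Fin k => |C p.1 p.2|).bddAbove
    have hCf : ∀ w : (X × Fin k) × Fin k, |C w.1.2 w.2 * f (w.1.1, w.2)| ≤ M * B := fun w => by
      have hCw : |C w.1.2 w.2| ≤ M := hM ⟨(w.1.2, w.2), rfl⟩
      rw [abs_mul]
      exact mul_le_mul hCw (hf _) (abs_nonneg _) ((abs_nonneg _).trans hCw)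
    have hP' : Summable fun w : (X × Fin k) × Fin k => P w.1 := by
      simpa using summable_mul_of_summable_norm (g := fun _ : Fin k => (1 : ℝ)) hP.norm .of_finite
    exact hP'.mul_of_abs_le hCf
  -- `e ((x, y), j) = ((x, j), y)` exchanges the clean and the corrupted label
  let e : (X × Fin k) × Fin k ≃ (X × Fin k) × Fin k :=
    (Equiv.prodAssoc _ _ _).trans <| ((Equiv.refl X).prodCongr (Equiv.prodComm _ _)).trans
      (Equiv.prodAssoc _ _ _).symm
  calc expect (corrupt P C) f = ∑' w, (G ∘ e) w := by
        rw [(e.summable_iff.2 hG).tsum_prod' fun _ => .of_finite]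
        simp [expect, corrupt, G, e, tsum_fintype, Finset.sum_mul, mul_assoc]
    _ = ∑' w, G w := e.tsum_eq G
    _ = expect P (chanOp C f) := by
        rw [hG.tsum_prod' fun _ => .of_finite]
        simp [expect, chanOp, G, tsum_fintype, Finset.mul_sum]

theorem expect_sub_expect_eq_of_chanOp_eq {X : Type*} {k : ℕ} {P Q : X × Fin k → ℝ}
    (hP : Summable P) (hQ : Summable Q) (hPQ : ∑' z, P z = ∑' z, Q z)
    {C : Matrix (Fin k) (Fin k) ℝ} {f f' : X × Fin k → ℝ} {B B' : ℝ} (hf : ∀ z, |f z| ≤ B)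
    (hf' : ∀ z, |f' z| ≤ B') {κ c : ℝ} (hκ : κ ≠ 0)
    (hCf' : chanOp C f' = fun z => κ⁻¹ * (f z - c)) :
    expect P f - expect Q f = κ * (expect (corrupt P C) f' - expect (corrupt Q C) f') := by
  rw [expect_corrupt hP C hf', expect_corrupt hQ C hf', hCf', expect_mul_sub_const hP hf,
    expect_mul_sub_const hQ hf, hPQ]
  field_simp
  ring

section matInfNorm

variable {k : ℕ}

theorem matInfNorm_smul (c : ℝ) (T : Matrix (Fin k) (Fin k) ℝ) :
    matInfNorm (c • T) = |c| * matInfNorm T := by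
  simp only [matInfNorm, Matrix.smul_apply, smul_eq_mul, abs_mul, ← Finset.mul_sum]
  exact (Real.mul_iSup_of_nonneg (abs_nonneg c) _).symm

theorem matInfNorm_eq_one_of_nonneg_of_sum_eq_one [NeZero k] {T : Matrix (Fin k) (Fin k) ℝ}
    (h0 : ∀ i j, 0 ≤ T i j) (h1 : ∀ i, ∑ j, T i j = 1) : matInfNorm T = 1 := by
  have hrow : ∀ i, ∑ j, |T i j| = 1 := fun i =>
    (Finset.sum_congr rfl fun j _ => abs_of_nonneg (h0 i j)).trans (h1 i)
  simp only [matInfNorm, hrow, ciSup_const]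

end matInfNorm

section chanOp

variable {X : Type*} {k : ℕ}

theorem chanOp_add (M : Matrix (Fin k) (Fin k) ℝ) (f g : X × Fin k → ℝ) :
    chanOp M (f + g) = chanOp M f + chanOp M g := by
  ext z
  simp [chanOp, mul_add, Finset.sum_add_distrib]

theorem chanOp_chanOp (M N : Matrix (Fin k) (Fin k) ℝ) (f : X × Fin k → ℝ) :
    chanOp M (chanOp N f) = chanOp (M * N) f := by
  ext z
  simp only [chanOp, Matrix.mul_apply, Finset.sum_mul, Finset.mul_sum, mul_assoc]
  exact Finset.sum_comm

theorem chanOp_smul_one (c : ℝ) (f : X × Fin k → ℝ) :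
    chanOp (c • (1 : Matrix (Fin k) (Fin k) ℝ)) f = c • f := by
  ext z
  simp [chanOp, Matrix.one_apply]

theorem chanOp_comp_fst {M : Matrix (Fin k) (Fin k) ℝ} (hM : ∀ i, ∑ j, M i j = 1) (u : X → ℝ) :
    chanOp M (fun z => u z.1) = fun z => u z.1 := by
  ext z
  simp only [chanOp, ← Finset.sum_mul, hM, one_mul]

end chanOp

namespace Assumption1

variable {X : Type*} {k : ℕ} {F : Set (X × Fin k → ℝ)} {f : X × Fin k → ℝ}

theorem chanOp_mem (hF : Assumption1 F) {T : Matrix (Fin k) (Fin k) ℝ} (hT : matInfNorm T = 1)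
    (hrow : ∀ i, ∑ j, T i j = 1) (hf : f ∈ F) : chanOp T f ∈ F := by
  obtain ⟨F1, F2, rfl, hF1, F2', rfl⟩ := hF
  obtain ⟨f1, hf1, _, ⟨g, hg, a, ha0, ha1, rfl⟩, c, rfl⟩ := hf
  refine ⟨chanOp T f1, hF1 T hT f1 hf1, _, ⟨g, hg, a, ha0, ha1, rfl⟩, c, ?_⟩
  rw [chanOp_add, chanOp_add, chanOp_comp_fst hrow fun x => a * g x]
  exact congrArg _ (chanOp_comp_fst hrow fun _ => c)

theorem exists_chanOp_eq (hF : Assumption1 F) {C T : Matrix (Fin k) (Fin k) ℝ} {κ : ℝ}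
    (hT : matInfNorm T = 1) (hrow : ∀ i, ∑ j, C i j = 1) (hCT : C * T = κ⁻¹ • 1) (hκ : 1 ≤ κ)
    (hf : f ∈ F) : ∃ f' ∈ F, ∃ c : ℝ, chanOp C f' = fun z => κ⁻¹ * (f z - c) := by
  obtain ⟨F1, F2, rfl, hF1, F2', rfl⟩ := hF
  obtain ⟨f1, hf1, _, ⟨g, hg, a, ha0, ha1, rfl⟩, c, rfl⟩ := hf
  have hκ0 : 0 < κ := zero_lt_one.trans_le hκ
  refine ⟨chanOp T f1 + (fun z => a / κ * g z.1) + Function.const _ 0,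
    ⟨_, hF1 T hT f1 hf1, _, ⟨g, hg, a / κ, by positivity, (div_le_one hκ0).2 (ha1.trans hκ), rfl⟩,
      0, rfl⟩, c, ?_⟩
  rw [chanOp_add, chanOp_add, chanOp_chanOp, hCT, chanOp_smul_one,
    chanOp_comp_fst hrow fun x => a / κ * g x]
  ext z
  simp only [Pi.add_apply, Pi.smul_apply, smul_eq_mul, chanOp, Function.const_apply, mul_zero,
    Finset.sum_const_zero, add_zero, add_sub_cancel_right]
  ring

end Assumption1

section missingLabels

variable {m : ℕ} (αv : Fin m → ℝ)

theorem missAlpha_cases (p : ℝ → Prop) (h0 : p 0) (hα : ∀ y, p (αv y)) (i : Fin (m + 1)) :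
    p (missAlpha m αv i) := by
  unfold missAlpha
  split_ifs
  exacts [hα _, h0]

@[simp]
theorem missAlpha_last : missAlpha m αv (Fin.last m) = 0 := by
  simp [missAlpha]

@[simp]
theorem missAlpha_castSucc (y : Fin m) : missAlpha m αv y.castSucc = αv y := by
  simp [missAlpha]

theorem missConfusion_apply (i j : Fin (m + 1)) :
    missConfusion m αv i j =
      (if i = j then 1 - missAlpha m αv i else 0) +
        (if j = Fin.last m then missAlpha m αv i else 0) := by
  simp [missConfusion, Matrix.diagonal_apply, Matrix.vecMulVec_apply, Pi.single_apply]

theorem missConfusion_nonneg (h0 : ∀ y, 0 ≤ αv y) (h1 : ∀ y, αv y ≤ 1) (i j : Fin (m + 1)) :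
    0 ≤ missConfusion m αv i j := by
  have h0' := missAlpha_cases αv (0 ≤ ·) le_rfl h0 i
  have h1' := missAlpha_cases αv (· ≤ 1) zero_le_one h1 i
  rw [missConfusion_apply]
  split_ifs <;> linarith

theorem sum_missConfusion (i : Fin (m + 1)) : ∑ j, missConfusion m αv i j = 1 := by
  simp [missConfusion_apply, Finset.sum_add_distrib]

/-- Sherman–Morrison inverse of `missConfusion m αv`; the usual correction term vanishes
because `α_m = 0`. -/
noncomputable def missInv : Matrix (Fin (m + 1)) (Fin (m + 1)) ℝ :=
  Matrix.diagonal (fun i => (1 - missAlpha m αv i)⁻¹) -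
    Matrix.vecMulVec (fun i => missAlpha m αv i / (1 - missAlpha m αv i))
      (Pi.single (Fin.last m) 1)

theorem missInv_apply (i j : Fin (m + 1)) :
    missInv αv i j =
      (if i = j then (1 - missAlpha m αv i)⁻¹ else 0) -
        (if j = Fin.last m then missAlpha m αv i / (1 - missAlpha m αv i) else 0) := by
  simp [missInv, Matrix.diagonal_apply, Matrix.vecMulVec_apply, Pi.single_apply]

theorem missConfusion_mul_missInv (h1 : ∀ y, αv y ≠ 1) : missConfusion m αv * missInv αv = 1 := by
  ext i k
  have hi : 1 - missAlpha m αv i ≠ 0 :=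
    sub_ne_zero.2 (missAlpha_cases αv (· ≠ 1) zero_ne_one h1 i).symm
  simp only [Matrix.mul_apply, missConfusion_apply, missInv_apply, add_mul, ite_mul, zero_mul,
    Finset.sum_add_distrib, Finset.sum_ite_eq, Finset.sum_ite_eq', Finset.mem_univ, if_true,
    missAlpha_last, Matrix.one_apply]
  by_cases hk : k = Fin.last m
  · subst hk
    by_cases hi' : i = Fin.last m
    · simp [hi']
    · simp only [hi', ↓reduceIte, zero_sub, mul_neg, mul_div_cancel₀ _ hi, sub_zero,
        inv_one, zero_div, mul_one, neg_add_cancel]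
  · have hk' : Fin.last m ≠ k := Ne.symm hk
    by_cases hik : i = k
    · subst hik
      simp [hk, hk', hi]
    · simp [hik, hk, hk']

theorem sum_abs_missInv (h0 : ∀ y, 0 ≤ αv y) (h1 : ∀ y, αv y < 1) (i : Fin (m + 1)) :
    ∑ j, |missInv αv i j| = (1 + missAlpha m αv i) / (1 - missAlpha m αv i) := by
  have h0' := missAlpha_cases αv (0 ≤ ·) le_rfl h0 i
  have h1' := missAlpha_cases αv (· < 1) zero_lt_one h1 i
  have hpos : 0 < 1 - missAlpha m αv i := by linarith
  have habs : ∀ j, |missInv αv i j| =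
      (if i = j then (1 - missAlpha m αv i)⁻¹ else 0) +
        (if j = Fin.last m then missAlpha m αv i / (1 - missAlpha m αv i) else 0) := by
    intro j
    rw [missInv_apply]
    by_cases hj : j = Fin.last m
    · subst hj
      by_cases hi : i = Fin.last m
      · simp [hi]
      · simp [hi, abs_div, abs_of_nonneg h0', abs_of_pos hpos]
    · by_cases hij : i = j
      · simp [hij, hj, abs_of_pos (hij ▸ hpos)]
      · simp [hij, hj]
  simp only [habs, Finset.sum_add_distrib, Finset.sum_ite_eq, Finset.sum_ite_eq', Finset.mem_univ,
    if_true]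
  field_simp

end missingLabels

theorem matInfNorm_missInv {m : ℕ} (hm : 0 < m) {αv : Fin m → ℝ} (h0 : ∀ y, 0 ≤ αv y)
    (h1 : (⨆ y, αv y) < 1) :
    matInfNorm (missInv αv) = (1 + ⨆ y, αv y) / (1 - ⨆ y, αv y) := by
  have : Nonempty (Fin m) := ⟨⟨0, hm⟩⟩
  have hle : ∀ y, αv y ≤ ⨆ y, αv y := le_ciSup (Set.finite_range αv).bddAbove
  obtain ⟨y₀, hy₀⟩ := exists_eq_ciSup_of_finite (f := αv)
  simp only [matInfNorm, sum_abs_missInv αv h0 fun y => (hle y).trans_lt h1]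
  apply le_antisymm
  · have hα₀ : 0 ≤ ⨆ y, αv y := (h0 y₀).trans (hle y₀)
    refine ciSup_le fun i => ?_
    have hi := missAlpha_cases αv (· ≤ ⨆ y, αv y) hα₀ hle i
    exact div_le_div₀ (by linarith) (by linarith) (by linarith) (by linarith)
  · rw [← hy₀, ← missAlpha_castSucc αv y₀]
    exact le_ciSup (f := fun i => (1 + missAlpha m αv i) / (1 - missAlpha m αv i))
      (Set.finite_range _).bddAbove y₀.castSucc

theorem one_le_one_add_div_one_sub {a : ℝ} (h0 : 0 ≤ a) (h1 : a < 1) : 1 ≤ (1 + a) / (1 - a) := by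
  rw [le_div_iff₀ (by linarith)]
  linarith

theorem sSup_image_le_mul_sSup_image {ι : Type*} {s : Set ι} {u v : ι → ℝ} {κ : ℝ} (hκ : 0 ≤ κ)
    (hu : ∀ i ∈ s, ∃ j ∈ s, u i ≤ κ * v j) (hv : ∀ i ∈ s, ∃ j ∈ s, v i ≤ u j) :
    sSup (u '' s) ≤ κ * sSup (v '' s) := by
  rcases s.eq_empty_or_nonempty with rfl | hs
  · simp
  by_cases hbdd : BddAbove (v '' s)
  · refine csSup_le (hs.image u) ?_
    rintro _ ⟨i, hi, rfl⟩
    obtain ⟨j, hj, hij⟩ := hu i hi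
    exact hij.trans (mul_le_mul_of_nonneg_left (le_csSup hbdd ⟨j, hj, rfl⟩) hκ)
  · have hu_unbdd : ¬BddAbove (u '' s) := by
      rintro ⟨b, hb⟩
      refine hbdd ⟨b, ?_⟩
      rintro _ ⟨i, hi, rfl⟩
      obtain ⟨j, hj, hij⟩ := hv i hi
      exact hij.trans (hb ⟨j, hj, rfl⟩)
    rw [Real.sSup_of_not_bddAbove hu_unbdd, Real.sSup_of_not_bddAbove hbdd, mul_zero]

theorem miss_nnDist_bound_general {X : Type*} {m : ℕ} (hm : 0 < m) (αv : Fin m → ℝ)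
    (hαv0 : ∀ y, 0 ≤ αv y)
    (hbar : (⨆ y, αv y) < 1)
    (P Q : X × Fin (m + 1) → ℝ) (hP : IsPMF P) (hQ : IsPMF Q)
    (F : Set (X × Fin (m + 1) → ℝ))
    (hFbd : ∀ f ∈ F, ∃ B : ℝ, ∀ z, |f z| ≤ B)
    (hF : Assumption1 F) :
    nnDist F P Q ≤ ((1 + ⨆ y, αv y) / (1 - ⨆ y, αv y)) *
      nnDist F (corrupt P (missConfusion m αv)) (corrupt Q (missConfusion m αv)) := by
  obtain ⟨-, hPs, hP1⟩ := hP
  obtain ⟨-, hQs, hQ1⟩ := hQ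
  have hle : ∀ y, αv y ≤ ⨆ y, αv y := le_ciSup (Set.finite_range αv).bddAbove
  have hlt : ∀ y, αv y < 1 := fun y => (hle y).trans_lt hbar
  set κ := (1 + ⨆ y, αv y) / (1 - ⨆ y, αv y)
  have hκ : 1 ≤ κ := one_le_one_add_div_one_sub ((hαv0 ⟨0, hm⟩).trans (hle _)) hbar
  have hκ0 : 0 < κ := zero_lt_one.trans_le hκ
  set C := missConfusion m αv
  have hC : matInfNorm C = 1 := matInfNorm_eq_one_of_nonneg_of_sum_eq_one
    (missConfusion_nonneg αv hαv0 fun y => (hlt y).le) (sum_missConfusion αv)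
  have hT : matInfNorm (κ⁻¹ • missInv αv) = 1 := by
    rw [matInfNorm_smul, matInfNorm_missInv hm hαv0 hbar, abs_of_pos (inv_pos.2 hκ0),
      inv_mul_cancel₀ hκ0.ne']
  have hCT : C * (κ⁻¹ • missInv αv) = κ⁻¹ • 1 := by
    rw [Matrix.mul_smul, missConfusion_mul_missInv αv fun y => (hlt y).ne]
  rw [nnDist_eq_sSup_expect, nnDist_eq_sSup_expect]
  refine sSup_image_le_mul_sSup_image hκ0.le (fun f hf => ?_) (fun f hf => ?_)
  all_goals obtain ⟨B, hB⟩ := hFbd f hf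
  · obtain ⟨f', hf', c, hCf'⟩ := hF.exists_chanOp_eq hT (sum_missConfusion αv) hCT hκ hf
    obtain ⟨B', hB'⟩ := hFbd f' hf'
    exact ⟨f', hf', (expect_sub_expect_eq_of_chanOp_eq hPs hQs (hP1.trans hQ1.symm) hB hB'
      hκ0.ne' hCf').le⟩
  · refine ⟨chanOp C f, hF.chanOp_mem hC (sum_missConfusion αv) hf, le_of_eq ?_⟩
    rw [expect_corrupt hPs C hB, expect_corrupt hQs C hB]

theorem miss_nnDist_bound {X : Type*} [Countable X] {m : ℕ} (hm : 0 < m) (αv : Fin m → ℝ)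
    (hαv0 : ∀ y, 0 ≤ αv y) (hαv1 : ∀ y, αv y ≤ 1)
    (hbar : (⨆ y, αv y) < 1)
    (P Q : X × Fin (m + 1) → ℝ) (hP : IsPMF P) (hQ : IsPMF Q)
    (hPz : ∀ x : X, P (x, Fin.last m) = 0) (hQz : ∀ x : X, Q (x, Fin.last m) = 0)
    (F : Set (X × Fin (m + 1) → ℝ))
    (hFbd : ∀ f ∈ F, ∃ B : ℝ, ∀ z, |f z| ≤ B)
    (hF : Assumption1 F) :
    nnDist F P Q ≤ ((1 + ⨆ y, αv y) / (1 - ⨆ y, αv y)) *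
      nnDist F (corrupt P (missConfusion m αv)) (corrupt Q (missConfusion m αv)) :=
  miss_nnDist_bound_general hm αv hαv0 hbar P Q hP hQ F hFbd hF
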